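/- Let α ∈ ℝ and let ξ₁, ξ₂, μ₁, μ₂ ∈ ℝ with ξ₁ ≠ 0, ξ₂ ≠ 0, ξ₁ + ξ₂ ≠ 0, |ξ₂| ≤ |ξ₁| and ξ₁² ≥ 6|α|. If (μ₁/ξ₁ − μ₂/ξ₂)² ≤ (1/2) (ξ₁+ξ₂)² (5(ξ₁² + ξ₁ξ₂ + ξ₂²) − 3α), then |R(ξ₁,ξ₂,μ₁,μ₂)| ≥ |ξ₁|³ |ξ₂| |ξ₁+ξ₂|. -/

import Mathlib

/-- The dispersion relation of the fifth order KP-I equation with parameter `α`: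
`ω(ξ,μ) = ξ⁵ − αξ³ + μ²/ξ` (for `ξ ≠ 0`). -/
noncomputable def omega5 (α ξ μ : ℝ) : ℝ := ξ ^ 5 - α * ξ ^ 3 + μ ^ 2 / ξ

/-- The resonance function of the fifth order KP-I equation:
`R(ξ₁,ξ₂,μ₁,μ₂) = ω(ξ₁+ξ₂,μ₁+μ₂) − ω(ξ₁,μ₁) − ω(ξ₂,μ₂)`. -/
noncomputable def resonance5 (α ξ₁ ξ₂ μ₁ μ₂ : ℝ) : ℝ :=
  omega5 α (ξ₁ + ξ₂) (μ₁ + μ₂) - omega5 α ξ₁ μ₁ - omega5 α ξ₂ μ₂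

/-!
Since `(a+b)⁵ − a⁵ − b⁵ = 5ab(a+b)(a²+ab+b²)`, `(a+b)³ − a³ − b³ = 3ab(a+b)` and
`(μ₁+μ₂)²/(ξ₁+ξ₂) − μ₁²/ξ₁ − μ₂²/ξ₂ = −ξ₁ξ₂(μ₁/ξ₁ − μ₂/ξ₂)²/(ξ₁+ξ₂)`, the resonance function
factors as `R = ξ₁ξ₂/(ξ₁+ξ₂) · ((ξ₁+ξ₂)² A − (μ₁/ξ₁ − μ₂/ξ₂)²)` with `A = 5(ξ₁²+ξ₁ξ₂+ξ₂²) − 3α`.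
The hypothesis on `μ` keeps the bracket above `(ξ₁+ξ₂)² A / 2`, and `ξ₁²+ξ₁ξ₂+ξ₂² ≥ 3ξ₁²/4`
together with `ξ₁² ≥ 6|α|` gives `A ≥ 2ξ₁²`.
-/

theorem resonance5_eq {α ξ₁ ξ₂ μ₁ μ₂ : ℝ} (h₁ : ξ₁ ≠ 0) (h₂ : ξ₂ ≠ 0) (h₁₂ : ξ₁ + ξ₂ ≠ 0) :
    resonance5 α ξ₁ ξ₂ μ₁ μ₂ = ξ₁ * ξ₂ / (ξ₁ + ξ₂) *
      ((ξ₁ + ξ₂) ^ 2 * (5 * (ξ₁ ^ 2 + ξ₁ * ξ₂ + ξ₂ ^ 2) - 3 * α) - (μ₁ / ξ₁ - μ₂ / ξ₂) ^ 2) := by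
  unfold resonance5 omega5
  field_simp
  ring

theorem two_mul_sq_le_five_mul_sq_add_mul_add_sq_sub {α a b : ℝ} (hα : 6 * |α| ≤ a ^ 2) :
    2 * a ^ 2 ≤ 5 * (a ^ 2 + a * b + b ^ 2) - 3 * α := by
  have hquad : 3 / 4 * a ^ 2 ≤ a ^ 2 + a * b + b ^ 2 := by nlinarith [sq_nonneg (b + a / 2)]
  linarith [le_abs_self α, sq_nonneg a]

theorem resonance5_highhigh_lower_bound_general (α ξ₁ ξ₂ μ₁ μ₂ : ℝ)
    (h₁ : ξ₁ ≠ 0) (h₂ : ξ₂ ≠ 0) (h₁₂ : ξ₁ + ξ₂ ≠ 0)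
    (hα : 6 * |α| ≤ ξ₁ ^ 2)
    (hres : (μ₁ / ξ₁ - μ₂ / ξ₂) ^ 2 ≤
      (1 / 2) * (ξ₁ + ξ₂) ^ 2 * (5 * (ξ₁ ^ 2 + ξ₁ * ξ₂ + ξ₂ ^ 2) - 3 * α)) :
    |ξ₁| ^ 3 * |ξ₂| * |ξ₁ + ξ₂| ≤ |resonance5 α ξ₁ ξ₂ μ₁ μ₂| := by
  set A := 5 * (ξ₁ ^ 2 + ξ₁ * ξ₂ + ξ₂ ^ 2) - 3 * α
  have hA : 2 * ξ₁ ^ 2 ≤ A := two_mul_sq_le_five_mul_sq_add_mul_add_sq_sub hα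
  have hbracket : (ξ₁ + ξ₂) ^ 2 * ξ₁ ^ 2 ≤ (ξ₁ + ξ₂) ^ 2 * A - (μ₁ / ξ₁ - μ₂ / ξ₂) ^ 2 := by
    linarith [mul_le_mul_of_nonneg_left hA (sq_nonneg (ξ₁ + ξ₂))]
  have hlhs : |ξ₁| ^ 3 * |ξ₂| * |ξ₁ + ξ₂| =
      |ξ₁ * ξ₂ / (ξ₁ + ξ₂)| * ((ξ₁ + ξ₂) ^ 2 * ξ₁ ^ 2) := by
    rw [abs_div, abs_mul, ← sq_abs (ξ₁ + ξ₂), ← sq_abs ξ₁]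
    field_simp [abs_ne_zero.mpr h₁₂]
  rw [resonance5_eq h₁ h₂ h₁₂, hlhs, abs_mul, abs_of_nonneg (hbracket.trans' (by positivity))]
  gcongr

/-- Quantitative non-resonance bound used in the high-high frequency
interaction of the bilinear estimate for the fifth order KP-I equation. -/
theorem resonance5_highhigh_lower_bound (α ξ₁ ξ₂ μ₁ μ₂ : ℝ)
    (h₁ : ξ₁ ≠ 0) (h₂ : ξ₂ ≠ 0) (h₁₂ : ξ₁ + ξ₂ ≠ 0)
    (hord : |ξ₂| ≤ |ξ₁|) (hα : 6 * |α| ≤ ξ₁ ^ 2)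
    (hres : (μ₁ / ξ₁ - μ₂ / ξ₂) ^ 2 ≤
      (1 / 2) * (ξ₁ + ξ₂) ^ 2 * (5 * (ξ₁ ^ 2 + ξ₁ * ξ₂ + ξ₂ ^ 2) - 3 * α)) :
    |ξ₁| ^ 3 * |ξ₂| * |ξ₁ + ξ₂| ≤ |resonance5 α ξ₁ ξ₂ μ₁ μ₂| :=
  resonance5_highhigh_lower_bound_general α ξ₁ ξ₂ μ₁ μ₂ h₁ h₂ h₁₂ hα hres
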